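/- arXiv:2602.19776 — 2 statements merged into one kernel-verified Lean document; each statement's English description precedes it below -/
import Mathlib

section
/- The pivot is symmetric in its two vertices: if (u,v) is an edge of the undirected irreflexive graph G, then G ∧ uv = G ∧ vu, i.e., ((G ⋆ u) ⋆ v) ⋆ u = ((G ⋆ v) ⋆ u) ⋆ v. -/
/-!
Over `𝔽₂`, local complementation at `w` adds `x a * x b` to the adjacency of distinct `a, b`,
where `x` is the indicator of `N(w)`. Let `x, y` be the indicators of `N(u), N(v)` in `G`.
Following the three steps, `G ∧ uv` exchanges the neighbourhoods of `u` and `v`, and for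
`a, b ∉ {u, v}` adds `x a x b + (x a + y a)(x b + y b) + y a y b = x a y b + y a x b`;
both descriptions are symmetric in `u` and `v`.
-/

/-- Local complementation of `G` about `u`: edges between distinct neighbours of `u`
are complemented, all other adjacencies preserved. -/
def localComp {V : Type*} (G : SimpleGraph V) (u : V) : SimpleGraph V where
  Adj a b := (G.Adj a b ∧ ¬(G.Adj u a ∧ G.Adj u b ∧ a ≠ b)) ∨
             (¬ G.Adj a b ∧ (G.Adj u a ∧ G.Adj u b ∧ a ≠ b))
  symm := by
    constructor
    intro a b h
    rcases h with ⟨h1, h2⟩ | ⟨h1, h2, h3, h4⟩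
    · exact Or.inl ⟨h1.symm, fun ⟨x, y, z⟩ => h2 ⟨y, x, z.symm⟩⟩
    · exact Or.inr ⟨fun hc => h1 hc.symm, h3, h2, h4.symm⟩
  loopless := by
    constructor
    intro a h
    rcases h with ⟨h1, _⟩ | ⟨_, _, _, h4⟩
    · exact G.irrefl h1
    · exact h4 rfl


/-- Pivot of G about the edge (u,v). -/
def pivot {V : Type*} (G : SimpleGraph V) (u v : V) : SimpleGraph V :=
  localComp (localComp (localComp G u) v) u

namespace localComp

variable {V : Type*} (G : SimpleGraph V) {w a b : V}

theorem adj_of_ne (hab : a ≠ b) :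
    (localComp G w).Adj a b ↔ Xor (G.Adj a b) (G.Adj w a ∧ G.Adj w b) := by
  simp only [localComp, xor_def]
  tauto

theorem adj_self_left : (localComp G w).Adj w b ↔ G.Adj w b := by
  simp [localComp]

variable {G}

theorem adj_of_adj_self_left (ha : G.Adj w a) :
    (localComp G w).Adj a b ↔ a ≠ b ∧ Xor (G.Adj a b) (G.Adj w b) := by
  by_cases hab : a = b
  · simp [hab]
  · simp [adj_of_ne G hab, ha, hab]

variable {u v : V}

theorem localComp_adj_left (huv : G.Adj u v) :
    (localComp (localComp G u) v).Adj u b ↔ b = v ∨ (b ≠ u ∧ G.Adj v b) := by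
  have hvu : (localComp G u).Adj v u := by simp [adj_of_adj_self_left huv, huv.ne.symm, huv.symm]
  rw [adj_of_adj_self_left hvu, adj_self_left, adj_of_adj_self_left huv]
  grind [SimpleGraph.Adj.symm, SimpleGraph.irrefl]

end localComp

namespace pivot

open localComp

variable {V : Type*} {G : SimpleGraph V} {u v a b : V}

theorem adj_left (huv : G.Adj u v) : (pivot G u v).Adj u b ↔ b = v ∨ (b ≠ u ∧ G.Adj v b) := by
  rw [pivot, adj_self_left, localComp_adj_left huv]

theorem adj_right (huv : G.Adj u v) : (pivot G u v).Adj v b ↔ b = u ∨ (b ≠ v ∧ G.Adj u b) := by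
  have huv₂ : (localComp (localComp G u) v).Adj u v := by simp [localComp_adj_left huv]
  rw [pivot, adj_of_adj_self_left huv₂, localComp_adj_left huv, adj_self_left,
    adj_of_adj_self_left huv]
  grind [SimpleGraph.Adj.symm, SimpleGraph.irrefl]

theorem adj_of_ne (huv : G.Adj u v) (hau : a ≠ u) (hav : a ≠ v) (hbu : b ≠ u) (hbv : b ≠ v) :
    (pivot G u v).Adj a b ↔
      Xor (G.Adj a b) (Xor (G.Adj u a ∧ G.Adj v b) (G.Adj v a ∧ G.Adj u b)) := by
  by_cases hab : a = b
  · subst hab; simp [and_comm]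
  rw [pivot, localComp.adj_of_ne _ hab, localComp.adj_of_ne _ hab, localComp.adj_of_ne _ hab,
    localComp_adj_left huv, localComp_adj_left huv,
    adj_of_adj_self_left huv, adj_of_adj_self_left huv]
  simp only [hau, hav, hbu, hbv, hav.symm, hbv.symm, ne_eq, not_false_eq_true, true_and, false_or]
  grind

end pivot

/-- The pivot is symmetric in its two vertices. -/
theorem pivot_symm {V : Type*} (G : SimpleGraph V) (u v : V) (huv : G.Adj u v) :
    pivot G u v = pivot G v u := by
  have hcenter : ∀ a b, a = u ∨ a = v → ((pivot G u v).Adj a b ↔ (pivot G v u).Adj a b) := by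
    rintro a b (rfl | rfl)
    · rw [pivot.adj_left huv, pivot.adj_right huv.symm]
    · rw [pivot.adj_right huv, pivot.adj_left huv.symm]
  ext a b
  by_cases ha : a = u ∨ a = v
  · exact hcenter a b ha
  by_cases hb : b = u ∨ b = v
  · rw [SimpleGraph.adj_comm, SimpleGraph.adj_comm (pivot G v u)]
    exact hcenter b a hb
  push Not at ha hb
  rw [pivot.adj_of_ne huv ha.1 ha.2 hb.1 hb.2, pivot.adj_of_ne huv.symm ha.2 ha.1 hb.2 hb.1,
    xor_comm (G.Adj v a ∧ G.Adj u b)]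
end

section
/- Let G be an undirected irreflexive graph with edge (u,v), and set A := N_G(u) ∩ N_G(v), B := (N_G(u) \ N_G(v)) \ {v}, C := (N_G(v) \ N_G(u)) \ {u}. Then for vertices a, b lying in two distinct sets among A, B, C, (a,b) is an edge of G ∧ uv if and only if (a,b) is not an edge of G. -/
/-!
Write `x_a`, `y_a` for the adjacency of a vertex `a ∉ {u, v}` to `u` and to `v`. Complementing
about `u` turns the neighbourhood of `v` into `N(v) Δ N(u)`; complementing about `v` then turns
the neighbourhood of `u` into `N(v)`. Adding the three toggles modulo 2, the pivot flips `ab`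
iff `x_a y_b + y_a x_b = 1`, and the classes `A, B, C` are exactly the types
`(x, y) = (1, 1), (1, 0), (0, 1)`, any two distinct of which give `1`.
-/

section

variable {V : Type*} (G : SimpleGraph V)

theorem localComp_adj {w a b : V} :
    (localComp G w).Adj a b ↔ Xor (G.Adj a b) (G.Adj w a ∧ G.Adj w b ∧ a ≠ b) := by
  simp only [localComp, Xor]
  tauto

theorem localComp_localComp_adj_left {u v x : V} (huv : G.Adj u v) (hxu : x ≠ u) (hxv : x ≠ v) :
    (localComp (localComp G u) v).Adj u x ↔ G.Adj v x := by
  simp only [localComp_adj, SimpleGraph.irrefl, ne_eq, hxu.symm, hxv.symm, huv.ne', G.adj_comm v u,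
    huv, not_false_eq_true, and_true, true_and, false_and, and_false, xor_true]
  grind

theorem pivot_adj {u v a b : V} (huv : G.Adj u v) (hau : a ≠ u) (hav : a ≠ v)
    (hbu : b ≠ u) (hbv : b ≠ v) :
    (pivot G u v).Adj a b ↔
      Xor (G.Adj a b) (Xor (G.Adj u a ∧ G.Adj v b) (G.Adj v a ∧ G.Adj u b)) := by
  obtain rfl | hab := eq_or_ne a b
  · simp [and_comm]
  simp only [pivot, localComp_adj (localComp (localComp G u) v),
    localComp_localComp_adj_left G huv hau hav, localComp_localComp_adj_left G huv hbu hbv,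
    localComp_adj (localComp G u), localComp_adj G, huv, ne_eq, hab, not_false_eq_true, and_true]
  grind

end

/-- Edges between any two of the three sets A, B, C are complemented by the pivot. -/
theorem pivot_complement_between {V : Type*} (G : SimpleGraph V) (u v : V)
    (huv : G.Adj u v)
    (A B C : Set V)
    (hA : A = G.neighborSet u ∩ G.neighborSet v)
    (hB : B = (G.neighborSet u \ G.neighborSet v) \ {v})
    (hC : C = (G.neighborSet v \ G.neighborSet u) \ {u}) :
    ∀ S ∈ ({A, B, C} : Set (Set V)), ∀ T ∈ ({A, B, C} : Set (Set V)), S ≠ T →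
      ∀ a ∈ S, ∀ b ∈ T, ((pivot G u v).Adj a b ↔ ¬ G.Adj a b) := by
  subst hA hB hC
  intro S hS T hT hST a ha b hb
  simp only [Set.mem_insert_iff, Set.mem_singleton_iff] at hS hT
  rcases hS with rfl | rfl | rfl <;> rcases hT with rfl | rfl | rfl <;>
    first
    | exact absurd rfl hST
    | simp only [Set.mem_inter_iff, Set.mem_sdiff, SimpleGraph.mem_neighborSet,
        Set.mem_singleton_iff] at ha hb
      rw [pivot_adj G huv (by rintro rfl; simp_all) (by rintro rfl; simp_all)
        (by rintro rfl; simp_all) (by rintro rfl; simp_all)]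
      simp_all [xor_comm _ True]
end
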